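/- arXiv:1911.10240 — 2 statements merged into one kernel-verified Lean document; each statement's English description precedes it below -/
import Mathlib

section
/- For every positive integer k, there exists a tournament D on n = 3k vertices with no extreme vertices such that ohn(D) = (2/3)n. In particular, D can be taken to be the lexicographic product of the transitive tournament on k vertices with the directed 3-cycle. -/
variable {V : Type*}

/-- A directed walk from `u` to `v` given as its list of vertices. -/
def DiwalkFrom (A : V → V → Prop) (u v : V) (l : List V) : Prop :=
  l.Chain' A ∧ l.head? = some u ∧ l.getLast? = some v

/-- A `(u,v)`-geodesic: a directed walk of minimum length (hence a shortest directed path). -/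
def IsGeodesic (A : V → V → Prop) (u v : V) (l : List V) : Prop :=
  DiwalkFrom A u v l ∧ ∀ l', DiwalkFrom A u v l' → l.length ≤ l'.length

/-- The interval `I(S)`: `S` together with all vertices on geodesics between members of `S`. -/
def geoInterval (A : V → V → Prop) (S : Set V) : Set V :=
  S ∪ {w | ∃ u ∈ S, ∃ v ∈ S, ∃ l, IsGeodesic A u v l ∧ w ∈ l}

def GeoConvex (A : V → V → Prop) (S : Set V) : Prop := geoInterval A S = S

/-- The geodesic convex hull of `S`. -/
def geoHull (A : V → V → Prop) (S : Set V) : Set V := ⋂₀ {T | S ⊆ T ∧ GeoConvex A T}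

def IsHullSet (A : V → V → Prop) (S : Set V) : Prop := geoHull A S = Set.univ

def IsGeodeticSet (A : V → V → Prop) (S : Set V) : Prop := geoInterval A S = Set.univ

noncomputable def hullNumber (A : V → V → Prop) : ℕ :=
  sInf {n | ∃ S : Set V, S.Finite ∧ S.ncard = n ∧ IsHullSet A S}

noncomputable def geodeticNumber (A : V → V → Prop) : ℕ :=
  sInf {n | ∃ S : Set V, S.Finite ∧ S.ncard = n ∧ IsGeodeticSet A S}

def IsSource (A : V → V → Prop) (v : V) : Prop := ∀ u, ¬ A u v
def IsSink (A : V → V → Prop) (v : V) : Prop := ∀ w, ¬ A v w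
def IsTransitiveVtx (A : V → V → Prop) (v : V) : Prop :=
  (∃ u, A u v) ∧ (∃ w, A v w) ∧ ∀ u w, A u v → A v w → A u w
def IsExtremeVtx (A : V → V → Prop) (v : V) : Prop :=
  IsSource A v ∨ IsSink A v ∨ IsTransitiveVtx A v

/-- An oriented graph: an asymmetric (hence irreflexive) arc relation. -/
def Oriented (A : V → V → Prop) : Prop := ∀ u v, A u v → ¬ A v u

/-- Directed distance, `⊤` if there is no directed walk. -/
noncomputable def ddist (A : V → V → Prop) (u v : V) : ℕ∞ :=
  sInf {n : ℕ∞ | ∃ l, DiwalkFrom A u v l ∧ (l.length : ℕ∞) = n + 1}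


/-- The lexicographic product of the transitive tournament on `Fin k`
with the directed 3-cycle (on `Fin 3`, arcs `a → a+1`). -/
def lexC3 (k : ℕ) (p q : Fin k × Fin 3) : Prop :=
  p.1 < q.1 ∨ (p.1 = q.1 ∧ q.2 = p.2 + 1)


/-!
Inside one copy of `C₃` the vertices `(i, a)` and `(i, a + 2)` are not adjacent, so the third
vertex of the copy lies on their unique geodesic; hence a convex set containing two vertices of
a copy contains the whole copy, and two vertices per copy form a hull set. Conversely, arcs never
decrease the block index, and vertices in different blocks are adjacent, so a geodesic passes
through an interior vertex of block `i` only if both its ends lie in block `i`. If a set `S`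
meets block `i` in at most one vertex, then `S` together with all other blocks is convex and
proper, so `S` is not a hull set: every hull set has at least two vertices in each block.
-/

section Geodesics

variable {A : V → V → Prop} {u v w : V} {l : List V}

theorem DiwalkFrom.exists_split (h : DiwalkFrom A u v l) (hw : w ∈ l) :
    ∃ l₁ l₂, DiwalkFrom A u w l₁ ∧ DiwalkFrom A w v l₂ := by
  obtain ⟨hc, hh, hl⟩ := h
  obtain ⟨s, t, rfl⟩ := List.append_of_mem hw
  have hc' : (s ++ w :: t).IsChain A := hc
  refine ⟨s ++ [w], w :: t, ⟨hc'.infix ?_, ?_, by simp⟩, ⟨hc'.infix ?_, rfl, ?_⟩⟩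
  · exact List.IsPrefix.isInfix ⟨t, by simp⟩
  · cases s <;> simpa using hh
  · exact (List.suffix_append s (w :: t)).isInfix
  · simpa [List.getLast?_append] using hl

theorem DiwalkFrom.le_of_monotone {β : Type*} [Preorder β] {f : V → β}
    (hf : ∀ x y, A x y → f x ≤ f y) (h : DiwalkFrom A u v l) : f u ≤ f v := by
  obtain ⟨hc, hh, hl⟩ := h
  refine List.IsChain.induction (fun x => f u ≤ f x) l hc
    (fun x y hxy hx => hx.trans (hf x y hxy)) (fun hne => ?_) v (List.mem_of_getLast? hl)
  rw [List.head?_eq_some_head hne, Option.some_inj] at hh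
  rw [hh]

theorem DiwalkFrom.mem_of_length_le_two (h : DiwalkFrom A u v l) (hl : l.length ≤ 2)
    (hw : w ∈ l) : w = u ∨ w = v := by
  obtain ⟨-, hh, hl'⟩ := h
  rcases l with _ | ⟨x, _ | ⟨y, _ | ⟨z, t⟩⟩⟩ <;> simp_all

theorem DiwalkFrom.three_le_length (h : DiwalkFrom A u v l) (hne : u ≠ v) (hna : ¬ A u v) :
    3 ≤ l.length := by
  obtain ⟨hc, hh, hl⟩ := h
  have hc' : l.IsChain A := hc
  rcases l with _ | ⟨x, _ | ⟨y, _ | ⟨z, t⟩⟩⟩ <;> simp_all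

theorem IsGeodesic.mem_of_eq_or_adj (h : IsGeodesic A u v l) (huv : u = v ∨ A u v)
    (hw : w ∈ l) : w = u ∨ w = v := by
  refine h.1.mem_of_length_le_two ?_ hw
  rcases huv with rfl | huv
  · exact (h.2 [u] ⟨List.isChain_singleton u, rfl, rfl⟩).trans (by simp)
  · exact h.2 [u, v] ⟨List.isChain_pair.mpr huv, rfl, rfl⟩

theorem isGeodesic_of_not_adj {x : V} (hux : A u x) (hxv : A x v) (hne : u ≠ v)
    (hna : ¬ A u v) : IsGeodesic A u v [u, x, v] :=
  ⟨⟨List.isChain_cons_cons.mpr ⟨hux, List.isChain_pair.mpr hxv⟩, rfl, rfl⟩,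
    fun _ hl => hl.three_le_length hne hna⟩

end Geodesics

section Hull

variable {A : V → V → Prop}

theorem geoConvex_iff {T : Set V} :
    GeoConvex A T ↔ ∀ u ∈ T, ∀ v ∈ T, ∀ l, IsGeodesic A u v l → ∀ w ∈ l, w ∈ T := by
  simp only [GeoConvex, geoInterval, Set.union_eq_left, Set.ofPred_subset]
  exact ⟨fun h u hu v hv l hl w hw => h w ⟨u, hu, v, hv, l, hl, hw⟩,
    fun h w ⟨u, hu, v, hv, l, hl, hw⟩ => h u hu v hv l hl w hw⟩

theorem isHullSet_iff {S : Set V} :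
    IsHullSet A S ↔ ∀ T, S ⊆ T → GeoConvex A T → T = Set.univ := by
  simp only [IsHullSet, geoHull, Set.sInter_eq_univ, Set.mem_ofPred_eq, and_imp]

theorem hullNumber_eq_of_forall_le {n : ℕ} {S₀ : Set V} (hS₀ : S₀.Finite) (hS₀n : S₀.ncard = n)
    (hS₀A : IsHullSet A S₀) (hle : ∀ S : Set V, S.Finite → IsHullSet A S → n ≤ S.ncard) :
    hullNumber A = n :=
  le_antisymm (Nat.sInf_le ⟨S₀, hS₀, hS₀n, hS₀A⟩)
    (le_csInf ⟨n, S₀, hS₀, hS₀n, hS₀A⟩ fun _ ⟨S, hS, hSn, hSA⟩ => hSn ▸ hle S hS hSA)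

end Hull

theorem two_mul_card_le_ncard {ι : Type*} [Fintype ι] (f : V → ι) {S : Set V} (hS : S.Finite)
    (hfib : ∀ i, (S ∩ f ⁻¹' {i}).Nontrivial) : 2 * Fintype.card ι ≤ S.ncard := by
  classical
  rw [Set.ncard_eq_toFinset_card S hS]
  refine Finset.mul_card_image_le_card_of_maps_to (f := f) (fun _ _ => Finset.mem_univ _) 2
    fun i _ => Finset.one_lt_card_iff_nontrivial.mpr ?_
  rw [← Finset.nontrivial_coe, Finset.coe_filter]
  simp only [Set.Finite.mem_toFinset]
  exact hfib i

namespace LexC3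

variable {k : ℕ}

theorem fst_le {p q : Fin k × Fin 3} (h : lexC3 k p q) : p.1 ≤ q.1 :=
  h.elim le_of_lt fun h => h.1.le

theorem adj_add_one (i : Fin k) (a : Fin 3) : lexC3 k (i, a) (i, a + 1) :=
  Or.inr ⟨rfl, rfl⟩

theorem add_two_adj (i : Fin k) (a : Fin 3) : lexC3 k (i, a + 2) (i, a) :=
  Or.inr ⟨rfl, by rw [add_assoc]; simp⟩

theorem add_one_adj_add_two (i : Fin k) (a : Fin 3) : lexC3 k (i, a + 1) (i, a + 2) :=
  Or.inr ⟨rfl, by rw [add_assoc]; rfl⟩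

theorem oriented : Oriented (lexC3 k) := by
  rintro p q (h | ⟨h, hq⟩) (h' | ⟨h', hp⟩)
  · exact h.asymm h'
  · exact h.ne h'.symm
  · exact h'.ne h.symm
  · rw [hp, add_assoc] at hq
    exact absurd hq (by simp)

theorem total {p q : Fin k × Fin 3} (hpq : p ≠ q) : lexC3 k p q ∨ lexC3 k q p := by
  rcases lt_trichotomy p.1 q.1 with h | h | h
  · exact Or.inl (Or.inl h)
  · have hs : p.2 ≠ q.2 := fun hs => hpq (Prod.ext h hs)
    have : q.2 = p.2 + 1 ∨ p.2 = q.2 + 1 :=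
      (by decide : ∀ a b : Fin 3, a ≠ b → b = a + 1 ∨ a = b + 1) _ _ hs
    exact this.imp (fun h' => Or.inr ⟨h, h'⟩) (fun h' => Or.inr ⟨h.symm, h'⟩)
  · exact Or.inr (Or.inl h)

theorem not_isExtremeVtx (p : Fin k × Fin 3) : ¬ IsExtremeVtx (lexC3 k) p := by
  obtain ⟨i, a⟩ := p
  rintro (hsrc | hsnk | ⟨-, -, htr⟩)
  · exact hsrc _ (add_two_adj i a)
  · exact hsnk _ (adj_add_one i a)
  · exact oriented _ _ (add_one_adj_add_two i a) (htr _ _ (add_two_adj i a) (adj_add_one i a))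

theorem mem_isGeodesic {u v w : Fin k × Fin 3} {l : List (Fin k × Fin 3)}
    (h : IsGeodesic (lexC3 k) u v l) (hw : w ∈ l) :
    w = u ∨ w = v ∨ (u ≠ v ∧ u.1 = w.1 ∧ v.1 = w.1) := by
  by_cases hadj : u = v ∨ lexC3 k u v
  · exact (h.mem_of_eq_or_adj hadj hw).imp_right Or.inl
  push Not at hadj
  obtain ⟨l₁, l₂, hl₁, hl₂⟩ := h.1.exists_split hw
  have huw : u.1 ≤ w.1 := hl₁.le_of_monotone fun _ _ => fst_le
  have hwv : w.1 ≤ v.1 := hl₂.le_of_monotone fun _ _ => fst_le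
  have hvu : v.1 ≤ u.1 := not_lt.mp fun hlt => hadj.2 (Or.inl hlt)
  exact Or.inr (Or.inr ⟨hadj.1, huw.antisymm (hwv.trans hvu), (hvu.trans huw).antisymm hwv⟩)

theorem mem_of_geoConvex {T : Set (Fin k × Fin 3)} (hT : GeoConvex (lexC3 k) T) {i : Fin k}
    {a b : Fin 3} (ha : (i, a) ∈ T) (hb : (i, b) ∈ T) (hab : a ≠ b) (c : Fin 3) : (i, c) ∈ T := by
  have mid : ∀ x : Fin 3, (i, x) ∈ T → (i, x + 2) ∈ T → (i, x + 1) ∈ T := by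
    intro x hx hx2
    have hne : ((i, x) : Fin k × Fin 3) ≠ (i, x + 2) := by simp
    have hna : ¬ lexC3 k (i, x) (i, x + 2) := fun h => oriented _ _ h (add_two_adj i x)
    exact geoConvex_iff.mp hT _ hx _ hx2 _
      (isGeodesic_of_not_adj (adj_add_one i x) (add_one_adj_add_two i x) hne hna) _ (by simp)
  have h0 := mid 0
  have h1 := mid 1
  have h2 := mid 2
  fin_cases a <;> fin_cases b <;> fin_cases c <;> simp_all

theorem nontrivial_inter_fiber_of_isHullSet {S : Set (Fin k × Fin 3)}
    (hS : IsHullSet (lexC3 k) S) (i : Fin k) : (S ∩ Prod.fst ⁻¹' {i}).Nontrivial := by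
  by_contra hsub
  rw [Set.not_nontrivial_iff] at hsub
  set T := S ∪ {p | p.1 ≠ i}
  have hT : GeoConvex (lexC3 k) T := by
    refine geoConvex_iff.mpr fun u hu v hv l hl w hw => ?_
    rcases mem_isGeodesic hl hw with rfl | rfl | ⟨hne, hu1, hv1⟩
    · exact hu
    · exact hv
    by_cases hwi : w.1 = i
    · have hu' : u ∈ S := hu.resolve_right (by simp [hu1, hwi])
      have hv' : v ∈ S := hv.resolve_right (by simp [hv1, hwi])
      exact absurd (hsub ⟨hu', hu1.trans hwi⟩ ⟨hv', hv1.trans hwi⟩) hne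
    · exact Or.inr hwi
  have hTuniv := isHullSet_iff.mp hS T Set.subset_union_left hT
  have hmem (a : Fin 3) : (i, a) ∈ S ∩ Prod.fst ⁻¹' {i} :=
    ⟨(Set.eq_univ_iff_forall.mp hTuniv (i, a)).resolve_right (by simp), rfl⟩
  exact absurd (hsub (hmem 0) (hmem 1)) (by simp)

theorem isHullSet_two_per_block :
    IsHullSet (lexC3 k) (Finset.univ ×ˢ {0, 1} : Finset (Fin k × Fin 3)) := by
  refine isHullSet_iff.mpr fun T hST hT => Set.eq_univ_of_forall fun ⟨i, c⟩ => ?_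
  exact mem_of_geoConvex hT (a := 0) (b := 1) (hST (by simp)) (hST (by simp)) (by decide) c

theorem hullNumber_eq : hullNumber (lexC3 k) = 2 * k := by
  refine hullNumber_eq_of_forall_le (Finset.finite_toSet _) ?_ isHullSet_two_per_block
    fun S hS hSA => ?_
  · simp [mul_comm]
  · simpa using two_mul_card_le_ncard Prod.fst hS (nontrivial_inter_fiber_of_isHullSet hSA)

end LexC3

theorem stmt_3_general (k : ℕ) :
    Oriented (lexC3 k) ∧
    (∀ p q : Fin k × Fin 3, p ≠ q → lexC3 k p q ∨ lexC3 k q p) ∧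
    (∀ v, ¬ IsExtremeVtx (lexC3 k) v) ∧
    hullNumber (lexC3 k) = 2 * k :=
  ⟨LexC3.oriented, fun _ _ => LexC3.total, LexC3.not_isExtremeVtx, LexC3.hullNumber_eq⟩

/-- for every `k > 0` there is a tournament on `n = 3k` vertices
without extreme vertices whose hull number is `(2/3)n = 2k`; namely the
lexicographic product of the transitive tournament on `k` vertices with `C3`. -/
theorem stmt_3 (k : ℕ) (hk : 0 < k) :
    Oriented (lexC3 k) ∧
    (∀ p q : Fin k × Fin 3, p ≠ q → lexC3 k p q ∨ lexC3 k q p) ∧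
    (∀ v, ¬ IsExtremeVtx (lexC3 k) v) ∧
    hullNumber (lexC3 k) = 2 * k :=
  stmt_3_general k
end

section
/- If G is a connected bipartite graph, then the hull number of G equals the hull number of the oriented graph G→C4 obtained by replacing each edge with a directed 4-cycle. -/
/-!
The directed geodesics of `G→C4` between original vertices are exactly the lifts
`v₀ v₀,₁ v₁ v₁,₂ … vₖ` of geodesics `v₀ v₁ … vₖ` of `G`. Hence a hull set `S` of `G` is one of
`G→C4`: the convex hull of `S` there contains every original vertex, and `v_{i,j}` lies on the
geodesic `v_i v_{i,j} v_j`. Conversely, lifting a convex set `T` of `G` to the vertices of `G→C4`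
whose underlying original vertices lie in `T` gives a convex set, so the original vertices
underlying a hull set `S'` of `G→C4` form a hull set of `G`. Each edge vertex of `S'` stands for
two adjacent vertices, and as `G` is bipartite, seen from any fixed anchor vertex one of them lies
on a geodesic to the other; keeping only the farther one gives a hull set of `G` of size at most
`|S'|`.
-/

variable {V : Type*}

/-- Vertex set of `G→C4`: original vertices plus one vertex `v_{i,j}` per ordered adjacent pair. -/
abbrev oC4V {V : Type*} (G : SimpleGraph V) := V ⊕ {p : V × V // G.Adj p.1 p.2}

/-- `G→C4`: each edge `v_i v_j` of `G` replaced by the directed 4-cycle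
`(v_i, v_{i,j}, v_j, v_{j,i})`. -/
def oC4 {V : Type*} (G : SimpleGraph V) : oC4V G → oC4V G → Prop
  | Sum.inl i, Sum.inr p => i = p.1.1
  | Sum.inr p, Sum.inl j => j = p.1.2
  | _, _ => False


namespace DiwalkFrom

variable {A : V → V → Prop} {u v w : V} {l : List V}

lemma ne_nil (h : DiwalkFrom A u v l) : l ≠ [] := by
  rintro rfl
  simp [DiwalkFrom] at h

lemma singleton (A : V → V → Prop) (u : V) : DiwalkFrom A u u [u] :=
  ⟨List.isChain_singleton u, rfl, rfl⟩

lemma cons (h : DiwalkFrom A v w l) (huv : A u v) : DiwalkFrom A u w (u :: l) := by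
  obtain ⟨hc, hh, hl⟩ := h
  obtain ⟨t, rfl⟩ : ∃ t, l = v :: t := by
    rcases l with _ | ⟨b, t⟩
    · simp at hh
    · exact ⟨t, by simpa using hh⟩
  exact ⟨List.isChain_cons_cons.2 ⟨huv, hc⟩, rfl, by rwa [List.getLast?_cons_cons]⟩

lemma reverse (h : DiwalkFrom A u v l) : DiwalkFrom (flip A) v u l.reverse :=
  ⟨List.isChain_reverse.2 h.1, by rw [List.head?_reverse]; exact h.2.2,
    by rw [List.getLast?_reverse]; exact h.2.1⟩

lemma concat (h : DiwalkFrom A u v l) (hvw : A v w) : DiwalkFrom A u w (l ++ [w]) := by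
  simpa using (h.reverse.cons (u := w) hvw).reverse

lemma two_le_length (h : DiwalkFrom A u v l) (huv : u ≠ v) : 2 ≤ l.length := by
  rcases l with _ | ⟨a, _ | ⟨b, t⟩⟩
  · exact absurd rfl h.ne_nil
  · obtain ⟨_, hh, hl⟩ := h
    simp only [List.head?_cons, List.getLast?_singleton, Option.some.injEq] at hh hl
    exact absurd (hh.symm.trans hl) huv
  · simp

end DiwalkFrom

lemma diwalkFrom_cons_cons_iff {A : V → V → Prop} {u v w a : V} {t : List V} :
    DiwalkFrom A u w (a :: v :: t) ↔ a = u ∧ A u v ∧ DiwalkFrom A v w (v :: t) := by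
  simp only [DiwalkFrom, List.Chain', List.isChain_cons_cons, List.head?_cons,
    List.getLast?_cons_cons, Option.some.injEq, true_and]
  constructor
  · rintro ⟨⟨hav, hc⟩, rfl, hl⟩
    exact ⟨rfl, hav, hc, hl⟩
  · rintro ⟨rfl, hav, hc, hl⟩
    exact ⟨⟨hav, hc⟩, rfl, hl⟩

lemma diwalkFrom_singleton_iff {A : V → V → Prop} {u v a : V} :
    DiwalkFrom A u v [a] ↔ a = u ∧ a = v := by
  simp [DiwalkFrom, List.Chain']

namespace IsGeodesic

variable {A : V → V → Prop} {u v w x y s : V} {l : List V}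

lemma exists_of_diwalkFrom (h : DiwalkFrom A u v l) : ∃ l', IsGeodesic A u v l' := by
  classical
  have hex : ∃ n, ∃ l, DiwalkFrom A u v l ∧ l.length = n := ⟨_, l, h, rfl⟩
  obtain ⟨l', hl', hlen⟩ := Nat.find_spec hex
  exact ⟨l', hl', fun m hm => hlen ▸ Nat.find_min' hex ⟨m, hm, rfl⟩⟩

lemma reverse (h : IsGeodesic A u v l) : IsGeodesic (flip A) v u l.reverse :=
  ⟨h.1.reverse, fun m hm => by simpa using h.2 _ hm.reverse⟩

lemma tail {t : List V} (h : IsGeodesic A u w (u :: v :: t)) : IsGeodesic A v w (v :: t) := by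
  obtain ⟨-, huv, h'⟩ := diwalkFrom_cons_cons_iff.1 h.1
  exact ⟨h', fun m hm => by simpa using h.2 _ (hm.cons huv)⟩

lemma concat_of_length_lt {i j : V} {li lj : List V} (hi : IsGeodesic A u i li)
    (hj : IsGeodesic A u j lj) (hij : A i j) (hlt : li.length < lj.length) :
    IsGeodesic A u j (li ++ [j]) :=
  ⟨hi.1.concat hij, fun m hm => by simpa using hlt.trans_le (hj.2 m hm)⟩

lemma eq_singleton (h : IsGeodesic A u u l) : l = [u] := by
  have hle : l.length ≤ 1 := h.2 _ (DiwalkFrom.singleton A u)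
  rcases l with _ | ⟨a, _ | ⟨b, t⟩⟩
  · exact absurd rfl h.1.ne_nil
  · simpa using h.1.2.1
  · simp at hle

lemma eq_or_mem_of_unique_succ (h : IsGeodesic A x y l) (hw : w ∈ l)
    (hs : ∀ z, A x z → z = s) : w = x ∨ ∃ l', IsGeodesic A s y l' ∧ w ∈ l' := by
  obtain ⟨t, rfl⟩ : ∃ t, l = x :: t := by
    rcases l with _ | ⟨a, t⟩
    · exact absurd rfl h.1.ne_nil
    · exact ⟨t, by simpa using h.1.2.1⟩
  rcases List.mem_cons.1 hw with rfl | hwt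
  · exact Or.inl rfl
  obtain ⟨a, t, rfl⟩ := List.exists_cons_of_ne_nil (List.ne_nil_of_mem hwt)
  obtain rfl : a = s := hs a (diwalkFrom_cons_cons_iff.1 h.1).2.1
  exact Or.inr ⟨_, h.tail, hwt⟩

lemma eq_or_mem_of_unique_pred (h : IsGeodesic A x y l) (hw : w ∈ l)
    (hs : ∀ z, A z y → z = s) : w = y ∨ ∃ l', IsGeodesic A x s l' ∧ w ∈ l' := by
  refine (h.reverse.eq_or_mem_of_unique_succ (List.mem_reverse.2 hw) hs).imp_right ?_
  rintro ⟨l', hl', hwl'⟩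
  exact ⟨l'.reverse, hl'.reverse, List.mem_reverse.2 hwl'⟩

end IsGeodesic

section Hull

variable {A : V → V → Prop} {S T : Set V}

lemma subset_geoInterval : S ⊆ geoInterval A S := Set.subset_union_left

lemma geoConvex_iff_geoInterval_subset : GeoConvex A S ↔ geoInterval A S ⊆ S :=
  ⟨Eq.subset, fun h => h.antisymm subset_geoInterval⟩

lemma geoInterval_mono (h : S ⊆ T) : geoInterval A S ⊆ geoInterval A T := by
  rintro w (hw | ⟨u, hu, v, hv, l, hl, hwl⟩)
  · exact Or.inl (h hw)
  · exact Or.inr ⟨u, h hu, v, h hv, l, hl, hwl⟩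

lemma mem_geoInterval_of_isGeodesic {u v w : V} {l : List V} (hu : u ∈ S) (hv : v ∈ S)
    (hl : IsGeodesic A u v l) (hw : w ∈ l) : w ∈ geoInterval A S :=
  Or.inr ⟨u, hu, v, hv, l, hl, hw⟩

lemma subset_geoHull : S ⊆ geoHull A S := fun _ hx _ hT => hT.1 hx

lemma geoHull_subset (hST : S ⊆ T) (hT : GeoConvex A T) : geoHull A S ⊆ T :=
  Set.sInter_subset_of_mem ⟨hST, hT⟩

lemma geoConvex_geoHull : GeoConvex A (geoHull A S) :=
  geoConvex_iff_geoInterval_subset.2 fun _ hw _ hT =>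
    hT.2.subset (geoInterval_mono (Set.sInter_subset_of_mem hT) hw)

lemma geoInterval_subset_geoHull : geoInterval A S ⊆ geoHull A S :=
  (geoInterval_mono subset_geoHull).trans geoConvex_geoHull.subset

lemma geoHull_empty : geoHull A (∅ : Set V) = ∅ :=
  Set.subset_empty_iff.1 <| geoHull_subset subset_rfl <|
    geoConvex_iff_geoInterval_subset.2 fun _ hw => hw.elim id fun ⟨_, hu, _⟩ => hu.elim

lemma geoHull_singleton (u : V) : geoHull A {u} = {u} := by
  refine (geoHull_subset subset_rfl (geoConvex_iff_geoInterval_subset.2 ?_)).antisymm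
    subset_geoHull
  rintro w (hw | ⟨a, rfl, b, rfl, l, hl, hwl⟩)
  · exact hw
  · rwa [hl.eq_singleton, List.mem_singleton] at hwl

lemma isHullSet_univ : IsHullSet A (Set.univ : Set V) :=
  Set.univ_subset_iff.1 subset_geoHull

lemma IsHullSet.eq_univ_of_geoConvex (hS : IsHullSet A S) (hST : S ⊆ T)
    (hT : GeoConvex A T) : T = Set.univ :=
  Set.univ_subset_iff.1 (hS ▸ geoHull_subset hST hT)

lemma IsHullSet.of_subset_geoHull (hS : IsHullSet A S) (h : S ⊆ geoHull A T) :
    IsHullSet A T :=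
  hS.eq_univ_of_geoConvex h geoConvex_geoHull

lemma IsHullSet.mono (hS : IsHullSet A S) (h : S ⊆ T) : IsHullSet A T :=
  hS.of_subset_geoHull (h.trans subset_geoHull)

lemma hullNumber_le_hullNumber {W : Type*} [Finite W] {B : W → W → Prop}
    (h : ∀ S', IsHullSet B S' →
      ∃ S : Set V, S.Finite ∧ S.ncard ≤ S'.ncard ∧ IsHullSet A S) :
    hullNumber A ≤ hullNumber B := by
  have hne : {n | ∃ S : Set W, S.Finite ∧ S.ncard = n ∧ IsHullSet B S}.Nonempty :=
    ⟨_, Set.univ, Set.toFinite _, rfl, isHullSet_univ⟩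
  obtain ⟨S', -, hcard, hS'⟩ := Nat.sInf_mem hne
  obtain ⟨S, hfin, hle, hS⟩ := h S' hS'
  have hA : hullNumber A ≤ S.ncard := Nat.sInf_le ⟨S, hfin, rfl, hS⟩
  exact hA.trans (hle.trans_eq hcard)

lemma pair_subset_geoInterval_of_isGeodesic {A : V → V → Prop} {u i j : V} {l : List V}
    (hl : IsGeodesic A u j l) (hi : i ∈ l) : {i, j} ⊆ geoInterval A {u, j} :=
  Set.insert_subset (mem_geoInterval_of_isGeodesic (by simp) (by simp) hl hi)
    (Set.singleton_subset_iff.2 (subset_geoInterval (by simp)))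

lemma IsHullSet.exists_image_of_anchor {A : V → V → Prop} {ι : Type*} {W : Set V} {I : Set ι}
    {u : V} (b : ι → Set V) (hb : ∀ z, ∃ k, b z ⊆ geoInterval A {u, k}) (hu : u ∈ W)
    (h : IsHullSet A (W ∪ ⋃ z ∈ I, b z)) : ∃ f : ι → V, IsHullSet A (W ∪ f '' I) := by
  choose f hf using hb
  refine ⟨f, h.of_subset_geoHull (Set.union_subset (Set.subset_union_left.trans subset_geoHull)
    (Set.iUnion₂_subset fun z hz => (hf z).trans ?_))⟩
  exact (geoInterval_mono (Set.insert_subset (Set.mem_union_left _ hu)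
    (Set.singleton_subset_iff.2 (Set.mem_union_right _ (Set.mem_image_of_mem f hz))))).trans
    geoInterval_subset_geoHull

end Hull

section Bipartite

variable {G : SimpleGraph V}

lemma SimpleGraph.Reachable.exists_isGeodesic {u v : V} (h : G.Reachable u v) :
    ∃ l, IsGeodesic G.Adj u v l := by
  obtain ⟨w⟩ := h
  refine IsGeodesic.exists_of_diwalkFrom (l := w.support) ⟨w.isChain_adj_support,
    by rw [← w.cons_tail_support]; rfl, ?_⟩
  rw [List.getLast?_eq_some_getLast w.support_ne_nil, w.getLast_support]

lemma DiwalkFrom.coloring_eq_iff_odd (c : G.Coloring (Fin 2)) :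
    ∀ {u v : V} {l : List V}, DiwalkFrom G.Adj u v l → (c u = c v ↔ Odd l.length)
  | _, _, [], h => absurd rfl h.ne_nil
  | _, _, [_], h => by
    obtain ⟨rfl, rfl⟩ := diwalkFrom_singleton_iff.1 h
    simp
  | _, _, _ :: _ :: _, h => by
    obtain ⟨rfl, hadj, h'⟩ := diwalkFrom_cons_cons_iff.1 h
    have hflip : ∀ a b d : Fin 2, a ≠ b → (a = d ↔ ¬ b = d) := by decide
    rw [hflip _ _ _ (c.valid hadj), DiwalkFrom.coloring_eq_iff_odd c h']
    simp [Nat.odd_add_one]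

/-- The two ends of an edge are at distances of different parity from `u`, so the nearer one
lies on a geodesic from `u` to the farther one. -/
lemma exists_pair_subset_geoInterval_of_adj (hconn : G.Connected) (hbip : G.Colorable 2)
    (u : V) {i j : V} (hij : G.Adj i j) : ∃ k, {i, j} ⊆ geoInterval G.Adj {u, k} := by
  obtain ⟨c⟩ := hbip
  obtain ⟨li, hli⟩ := (hconn.preconnected u i).exists_isGeodesic
  obtain ⟨lj, hlj⟩ := (hconn.preconnected u j).exists_isGeodesic
  have hne : li.length ≠ lj.length := by
    intro heq
    have hiff : c u = c i ↔ c u = c j := by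
      rw [hli.1.coloring_eq_iff_odd c, hlj.1.coloring_eq_iff_odd c, heq]
    have hfin : ∀ a b d : Fin 2, b ≠ d → ¬ (a = b ↔ a = d) := by decide
    exact hfin _ _ _ (c.valid hij) hiff
  rcases hne.lt_or_gt with hlt | hlt
  · exact ⟨j, pair_subset_geoInterval_of_isGeodesic (hli.concat_of_length_lt hlj hij hlt)
      (List.mem_append_left _ (List.mem_of_getLast? hli.1.2.2))⟩
  · exact ⟨i, Set.pair_comm i j ▸ pair_subset_geoInterval_of_isGeodesic
      (hlj.concat_of_length_lt hli hij.symm hlt)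
      (List.mem_append_left _ (List.mem_of_getLast? hlj.1.2.2))⟩

end Bipartite

namespace oC4

variable {G : SimpleGraph V}

def base : oC4V G → Set V
  | Sum.inl i => {i}
  | Sum.inr p => {p.1.1, p.1.2}

def liftSet (G : SimpleGraph V) (T : Set V) : Set (oC4V G) := {z | base z ⊆ T}

lemma adj_inl_inr (p : {p : V × V // G.Adj p.1 p.2}) : oC4 G (Sum.inl p.1.1) (Sum.inr p) := rfl

lemma adj_inr_inl (p : {p : V × V // G.Adj p.1 p.2}) : oC4 G (Sum.inr p) (Sum.inl p.1.2) := rfl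

lemma eq_inl_of_inr_adj {p : {p : V × V // G.Adj p.1 p.2}} {z : oC4V G}
    (h : oC4 G (Sum.inr p) z) : z = Sum.inl p.1.2 := by
  rcases z with j | q
  · exact congrArg Sum.inl h
  · exact h.elim

lemma eq_inl_of_adj_inr {p : {p : V × V // G.Adj p.1 p.2}} {z : oC4V G}
    (h : oC4 G z (Sum.inr p)) : z = Sum.inl p.1.1 := by
  rcases z with j | q
  · exact congrArg Sum.inl h
  · exact h.elim

lemma exists_eq_inr_of_inl_adj {i : V} {z : oC4V G} (h : oC4 G (Sum.inl i) z) :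
    ∃ p : {p : V × V // G.Adj p.1 p.2}, p.1.1 = i ∧ z = Sum.inr p := by
  rcases z with j | q
  · exact h.elim
  · exact ⟨q, h.symm, rfl⟩

lemma exists_diwalkFrom_inl_of_diwalkFrom : ∀ {u v : V} {m : List V}, DiwalkFrom G.Adj u v m →
    ∃ l, DiwalkFrom (oC4 G) (Sum.inl u) (Sum.inl v) l ∧ l.length + 1 = 2 * m.length ∧
      ∀ w ∈ m, Sum.inl w ∈ l
  | _, _, [], h => absurd rfl h.ne_nil
  | _, _, [_], h => by
    obtain ⟨rfl, rfl⟩ := diwalkFrom_singleton_iff.1 h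
    exact ⟨_, DiwalkFrom.singleton _ _, rfl, by simp⟩
  | _, _, a :: b :: _, h => by
    obtain ⟨rfl, hab, h'⟩ := diwalkFrom_cons_cons_iff.1 h
    obtain ⟨l, hl, hlen, hmem⟩ := exists_diwalkFrom_inl_of_diwalkFrom h'
    refine ⟨Sum.inl a :: Sum.inr ⟨(a, b), hab⟩ :: l,
      (hl.cons (adj_inr_inl _)).cons (adj_inl_inr ⟨(a, b), hab⟩), ?_, ?_⟩
    · simp only [List.length_cons] at hlen ⊢
      omega
    · intro w hw
      rcases List.mem_cons.1 hw with rfl | hw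
      · exact List.mem_cons_self
      · exact List.mem_cons_of_mem _ (List.mem_cons_of_mem _ (hmem w hw))

lemma exists_diwalkFrom_of_diwalkFrom_inl :
    ∀ {u v : V} {l : List (oC4V G)}, DiwalkFrom (oC4 G) (Sum.inl u) (Sum.inl v) l →
      ∃ m, DiwalkFrom G.Adj u v m ∧ l.length + 1 = 2 * m.length ∧
        ∀ z ∈ l, base z ⊆ {w | w ∈ m}
  | _, _, [], h => absurd rfl h.ne_nil
  | _, _, [_], h => by
    obtain ⟨rfl, h⟩ := diwalkFrom_singleton_iff.1 h
    obtain rfl := Sum.inl_injective h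
    exact ⟨_, DiwalkFrom.singleton _ _, rfl, by simp [base]⟩
  | u, v, _ :: z :: t, h => by
    obtain ⟨rfl, huz, h'⟩ := diwalkFrom_cons_cons_iff.1 h
    obtain ⟨p, rfl, rfl⟩ := exists_eq_inr_of_inl_adj huz
    obtain ⟨y, t, rfl⟩ : ∃ y t', t = y :: t' := by
      rcases t with _ | ⟨y, t⟩
      · exact absurd (diwalkFrom_singleton_iff.1 h').2 Sum.inr_ne_inl
      · exact ⟨y, t, rfl⟩
    obtain ⟨-, hpy, h''⟩ := diwalkFrom_cons_cons_iff.1 h'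
    obtain rfl := eq_inl_of_inr_adj hpy
    obtain ⟨m, hm, hlen, hbase⟩ := exists_diwalkFrom_of_diwalkFrom_inl h''
    have hp2 : p.1.2 ∈ m := List.mem_of_mem_head? hm.2.1
    refine ⟨p.1.1 :: m, hm.cons p.2, ?_, ?_⟩
    · simp only [List.length_cons] at hlen ⊢
      omega
    · intro z hz
      rcases List.mem_cons.1 hz with rfl | hz
      · simp [base]
      rcases List.mem_cons.1 hz with rfl | hz
      · exact Set.insert_subset (by simp) (by simp [hp2])
      · exact (hbase z hz).trans fun w hw => List.mem_cons_of_mem _ hw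

lemma exists_isGeodesic_inl_of_isGeodesic {u v : V} {m : List V} (hm : IsGeodesic G.Adj u v m) :
    ∃ l, IsGeodesic (oC4 G) (Sum.inl u) (Sum.inl v) l ∧ ∀ w ∈ m, Sum.inl w ∈ l := by
  obtain ⟨l, hl, hlen, hmem⟩ := exists_diwalkFrom_inl_of_diwalkFrom hm.1
  refine ⟨l, ⟨hl, fun l' hl' => ?_⟩, hmem⟩
  obtain ⟨m', hm', hlen', -⟩ := exists_diwalkFrom_of_diwalkFrom_inl hl'
  have := hm.2 m' hm'
  omega

lemma exists_isGeodesic_of_isGeodesic_inl {u v : V} {l : List (oC4V G)}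
    (hl : IsGeodesic (oC4 G) (Sum.inl u) (Sum.inl v) l) :
    ∃ m, IsGeodesic G.Adj u v m ∧ ∀ z ∈ l, base z ⊆ {w | w ∈ m} := by
  obtain ⟨m, hm, hlen, hbase⟩ := exists_diwalkFrom_of_diwalkFrom_inl hl.1
  refine ⟨m, ⟨hm, fun m' hm' => ?_⟩, hbase⟩
  obtain ⟨l', hl', hlen', -⟩ := exists_diwalkFrom_inl_of_diwalkFrom hm'
  have := hl.2 l' hl'
  omega

lemma isGeodesic_edge (p : {p : V × V // G.Adj p.1 p.2}) :
    IsGeodesic (oC4 G) (Sum.inl p.1.1) (Sum.inl p.1.2)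
      [Sum.inl p.1.1, Sum.inr p, Sum.inl p.1.2] := by
  refine ⟨((DiwalkFrom.singleton _ _).cons (adj_inr_inl p)).cons (adj_inl_inr p),
    fun l hl => ?_⟩
  obtain ⟨m, hm, hlen, -⟩ := exists_diwalkFrom_of_diwalkFrom_inl hl
  have := hm.two_le_length p.2.ne
  simp only [List.length_cons, List.length_nil]
  omega

lemma geoConvex_preimage_inl {T : Set (oC4V G)} (hT : GeoConvex (oC4 G) T) :
    GeoConvex G.Adj (Sum.inl ⁻¹' T) := by
  refine geoConvex_iff_geoInterval_subset.2 ?_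
  rintro w (hw | ⟨u, hu, v, hv, m, hm, hwm⟩)
  · exact hw
  · obtain ⟨l, hl, hml⟩ := exists_isGeodesic_inl_of_isGeodesic hm
    exact hT.subset (mem_geoInterval_of_isGeodesic hu hv hl (hml w hwm))

section LiftSet

variable {T : Set V} {x y w : oC4V G} {l : List (oC4V G)}

lemma mem_liftSet_of_mem_isGeodesic_inl (hT : GeoConvex G.Adj T) {u v : V} (hu : u ∈ T)
    (hv : v ∈ T) (hl : IsGeodesic (oC4 G) (Sum.inl u) (Sum.inl v) l) (hw : w ∈ l) :
    w ∈ liftSet G T := by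
  obtain ⟨m, hm, hbase⟩ := exists_isGeodesic_of_isGeodesic_inl hl
  exact fun i hi => hT.subset (mem_geoInterval_of_isGeodesic hu hv hm (hbase w hw hi))

lemma eq_or_mem_isGeodesic_from_inl (hx : x ∈ liftSet G T) (hl : IsGeodesic (oC4 G) x y l)
    (hw : w ∈ l) :
    w = x ∨ ∃ i ∈ T, ∃ l', IsGeodesic (oC4 G) (Sum.inl i) y l' ∧ w ∈ l' := by
  rcases x with i | p
  · exact Or.inr ⟨i, hx rfl, l, hl, hw⟩
  · refine (hl.eq_or_mem_of_unique_succ hw fun z => eq_inl_of_inr_adj).imp_right ?_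
    exact fun ⟨l', hl', hw'⟩ => ⟨p.1.2, hx (by simp [base]), l', hl', hw'⟩

lemma eq_or_mem_isGeodesic_to_inl (hy : y ∈ liftSet G T) (hl : IsGeodesic (oC4 G) x y l)
    (hw : w ∈ l) :
    w = y ∨ ∃ j ∈ T, ∃ l', IsGeodesic (oC4 G) x (Sum.inl j) l' ∧ w ∈ l' := by
  rcases y with j | p
  · exact Or.inr ⟨j, hy rfl, l, hl, hw⟩
  · refine (hl.eq_or_mem_of_unique_pred hw fun z => eq_inl_of_adj_inr).imp_right ?_
    exact fun ⟨l', hl', hw'⟩ => ⟨p.1.1, hy (by simp [base]), l', hl', hw'⟩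

lemma geoConvex_liftSet (hT : GeoConvex G.Adj T) : GeoConvex (oC4 G) (liftSet G T) := by
  refine geoConvex_iff_geoInterval_subset.2 ?_
  rintro w (hw | ⟨x, hx, y, hy, l, hl, hwl⟩)
  · exact hw
  rcases eq_or_mem_isGeodesic_from_inl hx hl hwl with rfl | ⟨i, hi, l₁, hl₁, hw₁⟩
  · exact hx
  rcases eq_or_mem_isGeodesic_to_inl hy hl₁ hw₁ with rfl | ⟨j, hj, l₂, hl₂, hw₂⟩
  · exact hy
  exact mem_liftSet_of_mem_isGeodesic_inl hT hi hj hl₂ hw₂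

end LiftSet

lemma isHullSet_image_inl {S : Set V} (hS : IsHullSet G.Adj S) :
    IsHullSet (oC4 G) (Sum.inl '' S) := by
  set H := geoHull (oC4 G) (Sum.inl '' S)
  have hinl : Sum.inl ⁻¹' H = Set.univ := hS.eq_univ_of_geoConvex
    (fun i hi => subset_geoHull ⟨i, hi, rfl⟩) (geoConvex_preimage_inl geoConvex_geoHull)
  have hmem : ∀ i : V, Sum.inl i ∈ H := Set.eq_univ_iff_forall.1 hinl
  refine Set.eq_univ_of_forall fun z => ?_
  rcases z with i | p
  · exact hmem i
  · exact geoConvex_geoHull.subset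
      (mem_geoInterval_of_isGeodesic (hmem _) (hmem _) (isGeodesic_edge p) (by simp))

lemma isHullSet_biUnion_base {S : Set (oC4V G)} (hS : IsHullSet (oC4 G) S) :
    IsHullSet G.Adj (⋃ z ∈ S, base z) := by
  set H := geoHull G.Adj (⋃ z ∈ S, base z)
  have hlift : liftSet G H = Set.univ := hS.eq_univ_of_geoConvex
    (fun z hz => (Set.subset_biUnion_of_mem hz).trans subset_geoHull)
    (geoConvex_liftSet geoConvex_geoHull)
  exact Set.eq_univ_of_forall fun i => Set.eq_univ_iff_forall.1 hlift (Sum.inl i) rfl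

lemma exists_mem_base (z : oC4V G) : ∃ u, u ∈ base z := by
  rcases z with i | p
  · exact ⟨i, rfl⟩
  · exact ⟨p.1.1, by simp [base]⟩

lemma exists_base_subset_geoInterval (hconn : G.Connected) (hbip : G.Colorable 2) (u : V)
    (z : oC4V G) : ∃ k, base z ⊆ geoInterval G.Adj {u, k} := by
  rcases z with i | p
  · exact ⟨i, Set.singleton_subset_iff.2 (subset_geoInterval (by simp))⟩
  · exact exists_pair_subset_geoInterval_of_adj hconn hbip u p.2

lemma exists_isHullSet_ncard_le [Finite V] (hconn : G.Connected) (hbip : G.Colorable 2)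
    {S : Set (oC4V G)} (hS : IsHullSet (oC4 G) S) :
    ∃ T : Set V, T.ncard ≤ S.ncard ∧ IsHullSet G.Adj T := by
  obtain ⟨k⟩ := hconn.nonempty
  obtain ⟨z₀, hz₀⟩ : S.Nonempty := by
    rw [Set.nonempty_iff_ne_empty]
    rintro rfl
    exact Set.eq_univ_iff_forall.1 (geoHull_empty.symm.trans hS) (Sum.inl k)
  rcases (S \ {z₀}).eq_empty_or_nonempty with hR | ⟨z₁, hz₁⟩
  · have hSz : S = {z₀} := (Set.sdiff_eq_empty.1 hR).antisymm (Set.singleton_subset_iff.2 hz₀)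
    rw [hSz, IsHullSet, geoHull_singleton] at hS
    have hall : ∀ z : oC4V G, z = z₀ := Set.eq_univ_iff_forall.1 hS
    refine ⟨{k}, by simp [hSz], isHullSet_univ.mono fun i _ => ?_⟩
    exact Sum.inl_injective ((hall _).trans (hall _).symm)
  -- a second vertex `z₁` provides the anchor for resolving `z₀`, which then anchors the rest
  obtain ⟨u, hu⟩ := exists_mem_base z₁
  obtain ⟨f, hf⟩ := IsHullSet.exists_image_of_anchor (I := {z₀}) base
    (exists_base_subset_geoInterval hconn hbip u) (Set.mem_biUnion hz₁ hu) (by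
      rw [Set.biUnion_singleton, Set.union_comm, ← Set.biUnion_insert,
        Set.insert_sdiff_self_of_mem hz₀]
      exact isHullSet_biUnion_base hS)
  rw [Set.image_singleton, Set.union_comm] at hf
  obtain ⟨g, hg⟩ := IsHullSet.exists_image_of_anchor base
    (exists_base_subset_geoInterval hconn hbip (f z₀)) (Set.mem_singleton _) hf
  refine ⟨{f z₀} ∪ g '' (S \ {z₀}), ?_, hg⟩
  calc ({f z₀} ∪ g '' (S \ {z₀})).ncard ≤ 1 + (S \ {z₀}).ncard := by
        grw [Set.ncard_union_le, Set.ncard_singleton, Set.ncard_image_le]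
    _ = S.ncard := by rw [add_comm, Set.ncard_sdiff_singleton_add_one hz₀]

end oC4

/-- for a connected bipartite graph `G`, `hn(G) = ohn(G→C4)`. -/
theorem stmt_8 [Fintype V] (G : SimpleGraph V) (hconn : G.Connected)
    (hbip : G.Colorable 2) :
    hullNumber G.Adj = hullNumber (oC4 G) := by
  refine le_antisymm (hullNumber_le_hullNumber fun S hS => ?_)
    (hullNumber_le_hullNumber fun S hS => ?_)
  · obtain ⟨T, hle, hT⟩ := oC4.exists_isHullSet_ncard_le hconn hbip hS
    exact ⟨T, Set.toFinite T, hle, hT⟩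
  · exact ⟨_, Set.toFinite _, (Set.ncard_image_of_injective _ Sum.inl_injective).le,
      oC4.isHullSet_image_inl hS⟩
end
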